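/- For all integers n ≥ 1 and m ≥ 2, ∫₀¹ Bₙ(x)·Cₘ(x) dx = −cos(πn/2) · n! · ζ(n+m) / (2π)^n. In particular the integral vanishes for odd n, and for even n it equals (−1)^{n/2+1} · n! · ζ(n+m) / (2π)^n. (This is the other cross case of the paper's orthogonality lemma.) -/

import Mathlib

/-!
The terms of `Cₘ` are bounded by `k⁻ᵐ`, so `Bₙ · Cₘ` may be integrated term by term. Against
`cos(2πkx)` the integral of `Bₙ` is the real part of its Fourier coefficient `-n! / (2πik)ⁿ`, that
is `-n! cos(πn/2) / (2πk)ⁿ`, and summing `k⁻ⁿ k⁻ᵐ` over `k ≥ 1` produces `ζ(n + m)`.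
-/

open Real MeasureTheory

/-- The real Bernoulli polynomial `Bₙ(x)`. -/
noncomputable def bernoulliPoly (n : ℕ) (x : ℝ) : ℝ :=
  Polynomial.aeval x (Polynomial.bernoulli n)

/-- The cosine Clausen-type series `C_m(x) = ∑_{k=1}^∞ cos(2πkx)/k^m`. -/
noncomputable def clausenC (m : ℕ) (x : ℝ) : ℝ :=
  ∑' k : ℕ+, Real.cos (2 * Real.pi * k * x) / (k : ℝ) ^ m

open scoped Nat

theorem bernoulliPoly_eq_bernoulliFun : bernoulliPoly = bernoulliFun := by
  ext n x
  rw [bernoulliPoly, bernoulliFun, Polynomial.aeval_def, Polynomial.eval₂_eq_eval_map]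

theorem hasSum_intervalIntegral_of_norm_le {ι E : Type*} [Countable ι] [NormedAddCommGroup E]
    [NormedSpace ℝ E] [CompleteSpace E] {f : ι → ℝ → E} {u : ι → ℝ} {a b : ℝ}
    (hf : ∀ i, Continuous (f i)) (hu : Summable u)
    (hfu : ∀ i, ∀ x ∈ Set.uIcc a b, ‖f i x‖ ≤ u i) :
    HasSum (fun i => ∫ x in a..b, f i x) (∫ x in a..b, ∑' i, f i x) :=
  intervalIntegral.hasSum_integral_of_dominated_convergence (fun i _ => u i)
    (fun i => (hf i).aestronglyMeasurable)
    (fun i => .of_forall fun x hx => hfu i x (Set.uIoc_subset_uIcc hx))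
    (.of_forall fun _ _ => hu) intervalIntegrable_const
    (.of_forall fun x hx => (hu.of_norm_bounded fun i => hfu i x (Set.uIoc_subset_uIcc hx)).hasSum)

theorem ofReal_tsum_pnat_one_div_pow {s : ℕ} (hs : 1 < s) :
    ((∑' k : ℕ+, 1 / (k : ℝ) ^ s : ℝ) : ℂ) = riemannZeta s := by
  have hs' : 1 < (s : ℂ).re := by simpa using hs
  rw [zeta_eq_tsum_one_div_nat_add_one_cpow hs', Complex.ofReal_tsum,
    tsum_pnat_eq_tsum_succ (f := fun k : ℕ => ((1 / (k : ℝ) ^ s : ℝ) : ℂ))]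
  push_cast
  simp only [Complex.cpow_natCast]

theorem re_inv_I_pow (n : ℕ) : ((Complex.I ^ n)⁻¹).re = cos (π * n / 2) := by
  rw [← inv_pow, Complex.inv_I, ← Complex.exp_neg_pi_div_two_mul_I, ← Complex.exp_nat_mul,
    show (n : ℂ) * (-π / 2 * Complex.I) = ((-(π * n / 2) : ℝ) : ℂ) * Complex.I by push_cast; ring,
    Complex.exp_ofReal_mul_I_re, cos_neg]

theorem integral_bernoulliFun_mul_cos_eq_re (n : ℕ) (k : ℤ) :
    ∫ x in (0:ℝ)..1, bernoulliFun n x * cos (2 * π * k * x) = (bernoulliFourierCoeff n k).re := by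
  rw [bernoulliFourierCoeff, fourierCoeffOn_eq_integral _ _ zero_lt_one, sub_zero, div_one,
    one_smul, ← RCLike.re_to_complex, ← intervalIntegral.intervalIntegral_re]
  · refine intervalIntegral.integral_congr fun x _ => ?_
    rw [fourier_coe_apply, smul_eq_mul, RCLike.re_to_complex, Complex.re_mul_ofReal,
      show 2 * (π : ℂ) * Complex.I * ((-k : ℤ) : ℂ) * x / ((1 : ℝ) : ℂ)
        = ((-(2 * π * k * x)) : ℝ) * Complex.I by push_cast; ring,
      Complex.exp_ofReal_mul_I_re, cos_neg, mul_comm]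
  · refine Continuous.intervalIntegrable ?_ _ _
    exact ((fourier (-k)).continuous.comp (AddCircle.continuous_mk' _)).smul
      (Complex.continuous_ofReal.comp (Polynomial.continuous _))

theorem integral_bernoulliFun_mul_cos {n : ℕ} (hn : n ≠ 0) (k : ℤ) :
    ∫ x in (0:ℝ)..1, bernoulliFun n x * cos (2 * π * k * x)
      = -n ! * cos (π * n / 2) / (2 * π * k) ^ n := by
  rw [integral_bernoulliFun_mul_cos_eq_re, bernoulliFourierCoeff_eq hn,
    show 2 * (π : ℂ) * Complex.I * k = ((2 * π * k : ℝ) : ℂ) * Complex.I by push_cast; ring,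
    mul_pow, div_mul_eq_div_div, div_eq_mul_inv _ (Complex.I ^ n),
    show -(n ! : ℂ) / ((2 * π * k : ℝ) : ℂ) ^ n = ((-n ! / (2 * π * k) ^ n : ℝ) : ℂ) by
      push_cast; ring,
    Complex.re_ofReal_mul, re_inv_I_pow]
  ring

theorem hasSum_integral_bernoulliFun_mul_clausenC {n m : ℕ} (hn : n ≠ 0) (hm : 2 ≤ m) :
    HasSum (fun k : ℕ+ => -n ! * cos (π * n / 2) / (2 * π) ^ n * (1 / (k : ℝ) ^ (n + m)))
      (∫ x in (0:ℝ)..1, bernoulliFun n x * clausenC m x) := by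
  obtain ⟨M, hM⟩ := (isCompact_uIcc (a := (0:ℝ)) (b := 1)).exists_bound_of_continuousOn
    (f := bernoulliFun n) (Polynomial.continuous _).continuousOn
  have hterm (k : ℕ+) :
      ∫ x in (0:ℝ)..1, bernoulliFun n x * (cos (2 * π * k * x) / (k : ℝ) ^ m)
        = -n ! * cos (π * n / 2) / (2 * π) ^ n * (1 / (k : ℝ) ^ (n + m)) := by
    have hk := integral_bernoulliFun_mul_cos hn k
    push_cast at hk
    simp only [← mul_div_assoc, intervalIntegral.integral_div, hk]
    field_simp
    ring
  simp only [← hterm, clausenC, ← tsum_mul_left]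
  refine hasSum_intervalIntegral_of_norm_le (u := fun k : ℕ+ => M * (1 / (k : ℝ) ^ m))
    (fun k => by fun_prop) ?_ fun k x hx => ?_
  · exact ((Real.summable_one_div_nat_pow.mpr (by omega)).comp_injective
      PNat.coe_injective).mul_left M
  · rw [norm_mul, norm_div, norm_pow, Real.norm_natCast]
    gcongr
    exacts [(norm_nonneg _).trans (hM x hx), hM x hx, abs_cos_le_one _]

/-- Cross case of the orthogonality lemma: for `n ≥ 1`, `m ≥ 2`,
`∫₀¹ Bₙ(x)·Cₘ(x) dx = −cos(πn/2)·n!·ζ(n+m)/(2π)^n`. -/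
theorem bernoulli_clausenC_cross (n m : ℕ) (hn : 1 ≤ n) (hm : 2 ≤ m) :
    ((∫ x in (0:ℝ)..1, bernoulliPoly n x * clausenC m x : ℝ) : ℂ) =
      -(Real.cos (Real.pi * n / 2) : ℂ) * (n.factorial : ℂ) *
        riemannZeta (n + m) / (2 * Real.pi : ℂ) ^ n := by
  rw [bernoulliPoly_eq_bernoulliFun,
    ← (hasSum_integral_bernoulliFun_mul_clausenC (by omega) hm).tsum_eq, tsum_mul_left,
    Complex.ofReal_mul, ofReal_tsum_pnat_one_div_pow (by omega)]
  push_cast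
  ring
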